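/- arXiv:1611.06932 — 6 statements merged into one kernel-verified Lean document; each statement's English description precedes it below -/
import Mathlib

section
/- The uniform-input statistical strength S_u is not an LOSR monotone: there exist natural numbers r, s, a no-signaling behavior P in the (r,s) Bell scenario, and an LOSR wiring W from the (r,s) scenario to itself such that S_u(W(P)) > S_u(P). -/
open scoped ENNReal
open Finset

/-- A probability distribution on a finite type. -/
def IsDist {Z : Type*} [Fintype Z] (p : Z → ℝ) : Prop :=
  (∀ z, 0 ≤ p z) ∧ ∑ z, p z = 1

/-- Relative entropy (Kullback-Leibler divergence) of finitely supported
distributions, valued in `[0,∞]`, with the conventions `0·log(0/t) = 0` and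
`S(p‖q) = ∞` whenever `q` vanishes at a point where `p` does not. -/
noncomputable def relEnt {Z : Type*} [Fintype Z] (p q : Z → ℝ) : ℝ≥0∞ :=
  if ∃ z, p z ≠ 0 ∧ q z = 0 then ⊤
  else ENNReal.ofReal (∑ z, p z * Real.log (p z / q z))

/-- A behavior in the (r,s) Bell scenario: `P a b x y = P(a,b|x,y)`. -/
def IsBehavior {r s : ℕ} (P : Fin r → Fin r → Fin s → Fin s → ℝ) : Prop :=
  (∀ a b x y, 0 ≤ P a b x y) ∧ ∀ x y, ∑ a, ∑ b, P a b x y = 1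

/-- The no-signaling conditions. -/
def NoSignaling {r s : ℕ} (P : Fin r → Fin r → Fin s → Fin s → ℝ) : Prop :=
  (∀ b x x' y, ∑ a, P a b x y = ∑ a, P a b x' y) ∧
  (∀ a x y y', ∑ b, P a b x y = ∑ b, P a b x y')

/-- Local (local-hidden-variable) behavior. -/
def IsLocal {r s : ℕ} (P : Fin r → Fin r → Fin s → Fin s → ℝ) : Prop :=
  ∃ (n : ℕ) (q : Fin n → ℝ) (PA : Fin r → Fin s → Fin n → ℝ)
    (PB : Fin r → Fin s → Fin n → ℝ),
    IsDist q ∧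
    (∀ x l, (∀ a, 0 ≤ PA a x l) ∧ ∑ a, PA a x l = 1) ∧
    (∀ y l, (∀ b, 0 ≤ PB b y l) ∧ ∑ b, PB b y l = 1) ∧
    (∀ a b x y, P a b x y = ∑ l, q l * PA a x l * PB b y l)

/-- Output distribution `P(·,·|x,y)` of a behavior for fixed inputs. -/
def outDist {r s : ℕ} (P : Fin r → Fin r → Fin s → Fin s → ℝ) (x y : Fin s) :
    Fin r × Fin r → ℝ := fun ab => P ab.1 ab.2 x y

/-- The behavior relative entropy `S_b(P‖P')`: the maximum over input pairs
`(x,y)` of the relative entropy of the output distributions. -/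
noncomputable def Sb {r s : ℕ} (P P' : Fin r → Fin r → Fin s → Fin s → ℝ) : ℝ≥0∞ :=
  Finset.univ.sup fun xy : Fin s × Fin s =>
    relEnt (outDist P xy.1 xy.2) (outDist P' xy.1 xy.2)

/-- A global wiring from the (r,s) scenario to the (rf,sf) scenario. -/
structure GlobalWiring (r s rf sf : ℕ) where
  I : Fin s → Fin s → Fin sf → Fin sf → ℝ          -- I x y χ ψ  =  I(x,y|χ,ψ)
  O : Fin rf → Fin rf → Fin r → Fin r → Fin s → Fin s → Fin sf → Fin sf → ℝ
    -- O α β a b x y χ ψ  =  O(α,β|a,b,x,y,χ,ψ)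
  I_nonneg : ∀ x y χ ψ, 0 ≤ I x y χ ψ
  I_sum : ∀ χ ψ, ∑ x, ∑ y, I x y χ ψ = 1
  O_nonneg : ∀ α β a b x y χ ψ, 0 ≤ O α β a b x y χ ψ
  O_sum : ∀ a b x y χ ψ, ∑ α, ∑ β, O α β a b x y χ ψ = 1

/-- Action of a global wiring on a behavior. -/
noncomputable def GlobalWiring.apply {r s rf sf : ℕ} (W : GlobalWiring r s rf sf)
    (P : Fin r → Fin r → Fin s → Fin s → ℝ) :
    Fin rf → Fin rf → Fin sf → Fin sf → ℝ :=
  fun α β χ ψ => ∑ a, ∑ b, ∑ x, ∑ y,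
    W.O α β a b x y χ ψ * P a b x y * W.I x y χ ψ

/-- LOSR wiring: a global wiring whose input and output boxes are local. -/
def GlobalWiring.IsLOSR {r s rf sf : ℕ} (W : GlobalWiring r s rf sf) : Prop :=
  ∃ (n m : ℕ) (q : Fin n → ℝ) (q' : Fin m → ℝ)
    (IA : Fin s → Fin sf → Fin n → ℝ) (IB : Fin s → Fin sf → Fin n → ℝ)
    (OA : Fin rf → Fin r → Fin s → Fin sf → Fin m → ℝ)
    (OB : Fin rf → Fin r → Fin s → Fin sf → Fin m → ℝ),
    IsDist q ∧ IsDist q' ∧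
    (∀ χ l, (∀ x, 0 ≤ IA x χ l) ∧ ∑ x, IA x χ l = 1) ∧
    (∀ ψ l, (∀ y, 0 ≤ IB y ψ l) ∧ ∑ y, IB y ψ l = 1) ∧
    (∀ a x χ u, (∀ α, 0 ≤ OA α a x χ u) ∧ ∑ α, OA α a x χ u = 1) ∧
    (∀ b y ψ u, (∀ β, 0 ≤ OB β b y ψ u) ∧ ∑ β, OB β b y ψ u = 1) ∧
    (∀ x y χ ψ, W.I x y χ ψ = ∑ l, q l * IA x χ l * IB y ψ l) ∧
    (∀ α β a b x y χ ψ,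
      W.O α β a b x y χ ψ = ∑ u, q' u * OA α a x χ u * OB β b y ψ u)

/-- UCLOSR wiring: a global wiring whose input and output boxes are products. -/
def GlobalWiring.IsUCLOSR {r s rf sf : ℕ} (W : GlobalWiring r s rf sf) : Prop :=
  ∃ (IA : Fin s → Fin sf → ℝ) (IB : Fin s → Fin sf → ℝ)
    (OA : Fin rf → Fin r → Fin s → Fin sf → ℝ)
    (OB : Fin rf → Fin r → Fin s → Fin sf → ℝ),
    (∀ χ, (∀ x, 0 ≤ IA x χ) ∧ ∑ x, IA x χ = 1) ∧
    (∀ ψ, (∀ y, 0 ≤ IB y ψ) ∧ ∑ y, IB y ψ = 1) ∧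
    (∀ a x χ, (∀ α, 0 ≤ OA α a x χ) ∧ ∑ α, OA α a x χ = 1) ∧
    (∀ b y ψ, (∀ β, 0 ≤ OB β b y ψ) ∧ ∑ β, OB β b y ψ = 1) ∧
    (∀ x y χ ψ, W.I x y χ ψ = IA x χ * IB y ψ) ∧
    (∀ α β a b x y χ ψ, W.O α β a b x y χ ψ = OA α a x χ * OB β b y ψ)

/-- The relative entropy of nonlocality `S_nl`. -/
noncomputable def Snl {r s : ℕ} (P : Fin r → Fin r → Fin s → Fin s → ℝ) : ℝ≥0∞ :=
  ⨅ (Q : Fin r → Fin r → Fin s → Fin s → ℝ) (_ : IsBehavior Q ∧ IsLocal Q), Sb P Q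

/-- The uniform-input statistical strength `S_u`. -/
noncomputable def Su {r s : ℕ} (P : Fin r → Fin r → Fin s → Fin s → ℝ) : ℝ≥0∞ :=
  ⨅ (Q : Fin r → Fin r → Fin s → Fin s → ℝ) (_ : IsBehavior Q ∧ IsLocal Q),
    ((s : ℝ≥0∞) ^ 2)⁻¹ * ∑ x, ∑ y, relEnt (outDist P x y) (outDist Q x y)

/-- The uncorrelated-input statistical strength `S_uc`. -/
noncomputable def Suc {r s : ℕ} (P : Fin r → Fin r → Fin s → Fin s → ℝ) : ℝ≥0∞ :=
  ⨆ (DA : Fin s → ℝ) (DB : Fin s → ℝ) (_ : IsDist DA ∧ IsDist DB),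
    ⨅ (Q : Fin r → Fin r → Fin s → Fin s → ℝ) (_ : IsBehavior Q ∧ IsLocal Q),
      ∑ x, ∑ y, ENNReal.ofReal (DA x * DB y) *
        relEnt (outDist P x y) (outDist Q x y)

/-! The PR box wins the CHSH game with certainty, while a local behavior wins it with
probability at most `3/4`; since `log t ≥ 1 - 1/t`, the relative entropy of a PR-box cell
from any `Q` is at least `1 - w`, where `w` is the probability that `Q` wins at that input pair.

Take `P` to be the PR box on the inputs `{0,1}` of the `(2,4)` scenario, padded with uniform
noise on the other inputs. Comparing with the uniform local behavior gives
`S_u(P) ≤ (4 log 2)/16`, as only four of the sixteen input pairs carry a PR box.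
The LOSR wiring that feeds each party the parity of its input turns `P` into a PR box on all
sixteen pairs, which split into four CHSH games; against any local `Q` the sixteen winning
probabilities sum to at most `12`, so `S_u(W(P)) ≥ (16 - 12)/16 = 1/4 > (log 2)/4`. -/

theorem ENNReal.ofReal_sum_le {ι : Type*} (s : Finset ι) (f : ι → ℝ) :
    ENNReal.ofReal (∑ i ∈ s, f i) ≤ ∑ i ∈ s, ENNReal.ofReal (f i) :=
  Finset.le_sum_of_subadditive _ ENNReal.ofReal_zero.le (fun _ _ => ENNReal.ofReal_add_le) s f

theorem relEnt_self {Z : Type*} [Fintype Z] (p : Z → ℝ) : relEnt p p = 0 := by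
  rw [relEnt, if_neg (by simp)]
  simp

theorem ofReal_sum_sub_le_relEnt {Z : Type*} [Fintype Z] {p q : Z → ℝ}
    (hp : ∀ z, 0 ≤ p z) (hq : ∀ z, 0 ≤ q z) :
    ENNReal.ofReal (∑ z ∈ univ.filter (p · ≠ 0), (p z - q z)) ≤ relEnt p q := by
  rw [relEnt]
  split_ifs with h
  · exact le_top
  refine ENNReal.ofReal_le_ofReal ?_
  calc ∑ z ∈ univ.filter (p · ≠ 0), (p z - q z)
      ≤ ∑ z ∈ univ.filter (p · ≠ 0), p z * Real.log (p z / q z) := by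
        refine Finset.sum_le_sum fun z hz => ?_
        have hpz : 0 < p z := (hp z).lt_of_ne' (Finset.mem_filter.1 hz).2
        have hqz : 0 < q z := (hq z).lt_of_ne' fun h0 => h ⟨z, hpz.ne', h0⟩
        have hlog := Real.one_sub_inv_le_log_of_pos (div_pos hpz hqz)
        rw [inv_div] at hlog
        calc p z - q z = p z * (1 - q z / p z) := by field_simp
          _ ≤ p z * Real.log (p z / q z) := by gcongr
    _ = ∑ z, p z * Real.log (p z / q z) :=
        Finset.sum_filter_of_ne fun z _ hz h0 => hz (by simp [h0])

namespace GlobalWiring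

noncomputable def relabelInputs {r s sf : ℕ} (f : Fin sf → Fin s) : GlobalWiring r s r sf where
  I x y χ ψ := (if x = f χ then 1 else 0) * (if y = f ψ then 1 else 0)
  O α β a b _ _ _ _ := (if α = a then 1 else 0) * (if β = b then 1 else 0)
  I_nonneg _ _ _ _ := by positivity
  I_sum _ _ := by simp
  O_nonneg _ _ _ _ _ _ _ _ := by positivity
  O_sum _ _ _ _ _ _ := by simp

theorem relabelInputs_apply {r s sf : ℕ} (f : Fin sf → Fin s)
    (P : Fin r → Fin r → Fin s → Fin s → ℝ) (α β : Fin r) (χ ψ : Fin sf) :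
    (relabelInputs f).apply P α β χ ψ = P α β (f χ) (f ψ) := by
  simp [apply, relabelInputs, ite_mul, mul_ite, Finset.sum_ite_eq, Finset.sum_ite_eq']

theorem isLOSR_relabelInputs {r s sf : ℕ} (f : Fin sf → Fin s) :
    (relabelInputs (r := r) f).IsLOSR := by
  refine ⟨1, 1, fun _ => 1, fun _ => 1,
    fun x χ _ => if x = f χ then 1 else 0, fun y ψ _ => if y = f ψ then 1 else 0,
    fun α a _ _ _ => if α = a then 1 else 0, fun β b _ _ _ => if β = b then 1 else 0,
    by simp [IsDist], by simp [IsDist], ?_, ?_, ?_, ?_, ?_, ?_⟩ <;>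
  intros <;> simp [relabelInputs, ite_nonneg]

end GlobalWiring

noncomputable def uniformBehavior (r s : ℕ) : Fin r → Fin r → Fin s → Fin s → ℝ :=
  fun _ _ _ _ => ((r : ℝ) ^ 2)⁻¹

theorem uniformBehavior_isBehavior {r s : ℕ} (hr : r ≠ 0) :
    IsBehavior (uniformBehavior r s) :=
  ⟨fun _ _ _ _ => inv_nonneg.2 (sq_nonneg _), fun _ _ => by
    simp only [uniformBehavior, sum_const, card_univ, Fintype.card_fin, nsmul_eq_mul]
    field_simp⟩

theorem uniformBehavior_isLocal {r s : ℕ} (hr : r ≠ 0) : IsLocal (uniformBehavior r s) := by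
  refine ⟨1, fun _ => 1, fun _ _ _ => (r : ℝ)⁻¹, fun _ _ _ => (r : ℝ)⁻¹, by simp [IsDist],
    fun _ _ => ⟨fun _ => by positivity, by simp [hr]⟩,
    fun _ _ => ⟨fun _ => by positivity, by simp [hr]⟩, fun _ _ _ _ => ?_⟩
  simp [uniformBehavior, sq]

/-- The winning condition `a ⊕ b = x y` of the CHSH game, with each input read mod `2`. -/
def chshWins {s : ℕ} (a b : Fin 2) (x y : Fin s) : Prop :=
  a = b ↔ ¬(x.val % 2 = 1 ∧ y.val % 2 = 1)

instance {s : ℕ} (a b : Fin 2) (x y : Fin s) : Decidable (chshWins a b x y) := by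
  unfold chshWins; infer_instance

noncomputable def prBox {s : ℕ} : Fin 2 → Fin 2 → Fin s → Fin s → ℝ :=
  fun a b x y => if chshWins a b x y then 1 / 2 else 0

theorem sum_prBox_left {s : ℕ} (b : Fin 2) (x y : Fin s) : ∑ a, prBox a b x y = 1 / 2 := by
  by_cases h : x.val % 2 = 1 ∧ y.val % 2 = 1 <;>
    fin_cases b <;> simp [prBox, chshWins, h, Fin.sum_univ_two]

theorem sum_prBox_right {s : ℕ} (a : Fin 2) (x y : Fin s) : ∑ b, prBox a b x y = 1 / 2 := by
  by_cases h : x.val % 2 = 1 ∧ y.val % 2 = 1 <;>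
    fin_cases a <;> simp [prBox, chshWins, h, Fin.sum_univ_two]

theorem sum_outDist_prBox {s : ℕ} (x y : Fin s) : ∑ z, outDist prBox x y z = 1 := by
  simp only [outDist, Fintype.sum_prod_type, sum_prBox_right]
  norm_num

theorem relEnt_prBox_uniformBehavior {s : ℕ} (x y : Fin s) :
    relEnt (outDist prBox x y) (outDist (uniformBehavior 2 s) x y)
      = ENNReal.ofReal (Real.log 2) := by
  rw [relEnt, if_neg (by simp [outDist, uniformBehavior])]
  have hterm : ∀ z : Fin 2 × Fin 2, outDist prBox x y z * Real.log
      (outDist prBox x y z / outDist (uniformBehavior 2 s) x y z)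
        = outDist prBox x y z * Real.log 2 := by
    intro z
    simp only [outDist, prBox, uniformBehavior]
    split_ifs <;> norm_num
  simp only [hterm, ← Finset.sum_mul, sum_outDist_prBox, one_mul]

noncomputable def chshWinProb {s : ℕ} (Q : Fin 2 → Fin 2 → Fin s → Fin s → ℝ) (x y : Fin s) : ℝ :=
  ∑ z ∈ univ.filter (fun z : Fin 2 × Fin 2 => chshWins z.1 z.2 x y), outDist Q x y z

theorem ofReal_one_sub_chshWinProb_le_relEnt {s : ℕ} {Q : Fin 2 → Fin 2 → Fin s → Fin s → ℝ}
    (hQ : ∀ a b x y, 0 ≤ Q a b x y) (x y : Fin s) :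
    ENNReal.ofReal (1 - chshWinProb Q x y) ≤ relEnt (outDist prBox x y) (outDist Q x y) := by
  convert ofReal_sum_sub_le_relEnt (p := outDist prBox x y) (q := outDist Q x y)
    (fun _ => by unfold outDist prBox; split_ifs <;> norm_num) (fun z => hQ z.1 z.2 x y) using 2
  have hsupp : univ.filter (outDist prBox x y · ≠ 0)
      = univ.filter (fun z : Fin 2 × Fin 2 => chshWins z.1 z.2 x y) :=
    Finset.filter_congr fun z _ => by simp [outDist, prBox]
  rw [hsupp, Finset.sum_sub_distrib, chshWinProb,
    Finset.sum_filter_of_ne (f := outDist prBox x y) fun z _ hz => ?_, sum_outDist_prBox]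
  by_contra h
  exact hz (by simp [outDist, prBox, h])

theorem chsh_le_three {a₀ a₁ b₀ b₁ : ℝ} (ha₀ : a₀ ∈ Set.Icc (0 : ℝ) 1)
    (ha₁ : a₁ ∈ Set.Icc (0 : ℝ) 1) (hb₀ : b₀ ∈ Set.Icc (0 : ℝ) 1) (hb₁ : b₁ ∈ Set.Icc (0 : ℝ) 1) :
    (a₀ * b₀ + (1 - a₀) * (1 - b₀)) + (a₀ * b₁ + (1 - a₀) * (1 - b₁)) +
      (a₁ * b₀ + (1 - a₁) * (1 - b₀)) + (a₁ * (1 - b₁) + (1 - a₁) * b₁) ≤ 3 := by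
  obtain ⟨ha₀, ha₀'⟩ := ha₀
  obtain ⟨ha₁, ha₁'⟩ := ha₁
  obtain ⟨hb₀, hb₀'⟩ := hb₀
  obtain ⟨hb₁, hb₁'⟩ := hb₁
  nlinarith [mul_nonneg ha₀ (sub_nonneg.2 hb₀'), mul_nonneg ha₀ (sub_nonneg.2 hb₁'),
    mul_nonneg (sub_nonneg.2 ha₀') hb₀, mul_nonneg (sub_nonneg.2 ha₀') hb₁,
    mul_nonneg ha₁ (sub_nonneg.2 hb₀'), mul_nonneg ha₁ hb₁,
    mul_nonneg (sub_nonneg.2 ha₁') hb₀, mul_nonneg (sub_nonneg.2 ha₁') (sub_nonneg.2 hb₁')]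

theorem sum_chshWinProb_product_le (A B : Fin 2 → Fin 4 → ℝ)
    (hA : ∀ x, (∀ a, 0 ≤ A a x) ∧ ∑ a, A a x = 1)
    (hB : ∀ y, (∀ b, 0 ≤ B b y) ∧ ∑ b, B b y = 1) :
    ∑ x, ∑ y, chshWinProb (fun a b x y => A a x * B b y) x y ≤ 12 := by
  have hA' : ∀ x, A 0 x ∈ Set.Icc (0 : ℝ) 1 ∧ A 1 x = 1 - A 0 x := fun x => by
    have := hA x; simp only [Fin.sum_univ_two] at this
    exact ⟨⟨this.1 0, by linarith [this.1 1]⟩, by linarith⟩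
  have hB' : ∀ y, B 0 y ∈ Set.Icc (0 : ℝ) 1 ∧ B 1 y = 1 - B 0 y := fun y => by
    have := hB y; simp only [Fin.sum_univ_two] at this
    exact ⟨⟨this.1 0, by linarith [this.1 1]⟩, by linarith⟩
  -- the sixteen input pairs form four CHSH games, on `{0,1}` or `{2,3}` for each party
  have := chsh_le_three (hA' 0).1 (hA' 1).1 (hB' 0).1 (hB' 1).1
  have := chsh_le_three (hA' 0).1 (hA' 1).1 (hB' 2).1 (hB' 3).1
  have := chsh_le_three (hA' 2).1 (hA' 3).1 (hB' 0).1 (hB' 1).1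
  have := chsh_le_three (hA' 2).1 (hA' 3).1 (hB' 2).1 (hB' 3).1
  simp only [chshWinProb, chshWins, outDist, sum_filter, Fintype.sum_prod_type, Fin.sum_univ_two,
    Fin.sum_univ_four, (hA' _).2, (hB' _).2, Fin.isValue, Fin.coe_ofNat_eq_mod, Nat.reduceMod,
    Nat.mod_self, Nat.zero_mod, Nat.one_mod, Nat.mod_succ,
    true_iff, false_iff, zero_ne_one, one_ne_zero, and_false, and_true, not_true, not_false_eq_true,
    ↓reduceIte, add_zero, zero_add]
  linarith

theorem chshWinProb_eq_sum_of_local {s n : ℕ} {Q : Fin 2 → Fin 2 → Fin s → Fin s → ℝ}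
    {q : Fin n → ℝ} {PA PB : Fin 2 → Fin s → Fin n → ℝ}
    (hQ : ∀ a b x y, Q a b x y = ∑ l, q l * PA a x l * PB b y l) (x y : Fin s) :
    chshWinProb Q x y
      = ∑ l : Fin n, q l * chshWinProb (fun a b x y => PA a x l * PB b y l) x y := by
  simp only [chshWinProb, outDist, hQ, Finset.mul_sum, mul_assoc]
  exact Finset.sum_comm

theorem sum_chshWinProb_le_of_isLocal {Q : Fin 2 → Fin 2 → Fin 4 → Fin 4 → ℝ} (hQ : IsLocal Q) :
    ∑ x, ∑ y, chshWinProb Q x y ≤ 12 := by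
  obtain ⟨n, q, PA, PB, ⟨hq, hq_sum⟩, hPA, hPB, hrep⟩ := hQ
  calc ∑ x, ∑ y, chshWinProb Q x y
      = ∑ l, q l * ∑ x, ∑ y, chshWinProb (fun a b x y => PA a x l * PB b y l) x y := by
        simp only [chshWinProb_eq_sum_of_local hrep, Finset.mul_sum]
        exact (Finset.sum_congr rfl fun x _ => Finset.sum_comm).trans Finset.sum_comm
    _ ≤ ∑ l, q l * 12 := by
        gcongr with l
        · exact hq l
        · exact sum_chshWinProb_product_le _ _ (fun x => hPA x l) (fun y => hPB y l)
    _ = 12 := by rw [← Finset.sum_mul, hq_sum, one_mul]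

theorem le_Su_prBox :
    (((4 : ℕ) : ℝ≥0∞) ^ 2)⁻¹ * ENNReal.ofReal 4
      ≤ Su (prBox : Fin 2 → Fin 2 → Fin 4 → Fin 4 → ℝ) := by
  refine le_iInf₂ fun Q ⟨hQ, hL⟩ => ?_
  gcongr
  calc ENNReal.ofReal 4 ≤ ENNReal.ofReal (∑ x, ∑ y, (1 - chshWinProb Q x y)) := by
        gcongr
        simp only [Finset.sum_sub_distrib]
        norm_num
        linarith [sum_chshWinProb_le_of_isLocal hL]
    _ ≤ ∑ x, ∑ y, ENNReal.ofReal (1 - chshWinProb Q x y) :=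
        (ENNReal.ofReal_sum_le _ _).trans
          (Finset.sum_le_sum fun _ _ => ENNReal.ofReal_sum_le _ _)
    _ ≤ ∑ x, ∑ y, relEnt (outDist prBox x y) (outDist Q x y) := by
        gcongr with x _ y _
        exact ofReal_one_sub_chshWinProb_le_relEnt hQ.1 x y

noncomputable def paddedPRBox : Fin 2 → Fin 2 → Fin 4 → Fin 4 → ℝ :=
  fun a b x y => if x.val ≤ 1 ∧ y.val ≤ 1 then prBox a b x y else 1 / 4

theorem sum_paddedPRBox_left (b : Fin 2) (x y : Fin 4) :
    ∑ a, paddedPRBox a b x y = 1 / 2 := by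
  unfold paddedPRBox
  split_ifs
  · exact sum_prBox_left b x y
  · norm_num

theorem sum_paddedPRBox_right (a : Fin 2) (x y : Fin 4) :
    ∑ b, paddedPRBox a b x y = 1 / 2 := by
  unfold paddedPRBox
  split_ifs
  · exact sum_prBox_right a x y
  · norm_num

theorem paddedPRBox_isBehavior : IsBehavior paddedPRBox := by
  refine ⟨fun a b x y => ?_, fun x y => ?_⟩
  · unfold paddedPRBox prBox; split_ifs <;> norm_num
  · simp only [sum_paddedPRBox_right]; norm_num

theorem paddedPRBox_noSignaling : NoSignaling paddedPRBox :=
  ⟨fun b x x' y => by rw [sum_paddedPRBox_left, sum_paddedPRBox_left],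
    fun a x y y' => by rw [sum_paddedPRBox_right, sum_paddedPRBox_right]⟩

def inputParity (χ : Fin 4) : Fin 4 := ⟨χ.val % 2, by omega⟩

theorem relabelInputs_inputParity_apply_paddedPRBox :
    (GlobalWiring.relabelInputs inputParity).apply paddedPRBox = prBox := by
  ext a b χ ψ
  have hχ : χ.val % 2 ≤ 1 := by omega
  have hψ : ψ.val % 2 ≤ 1 := by omega
  simp [GlobalWiring.relabelInputs_apply, paddedPRBox, prBox, chshWins, inputParity, hχ, hψ]

theorem relEnt_paddedPRBox_uniformBehavior (x y : Fin 4) :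
    relEnt (outDist paddedPRBox x y) (outDist (uniformBehavior 2 4) x y)
      = if x.val ≤ 1 ∧ y.val ≤ 1 then ENNReal.ofReal (Real.log 2) else 0 := by
  split_ifs with h
  · rw [← relEnt_prBox_uniformBehavior x y]
    congr 1
    ext z
    simp [outDist, paddedPRBox, h]
  · convert relEnt_self (outDist (uniformBehavior 2 4) x y) using 2
    ext z
    norm_num [outDist, paddedPRBox, uniformBehavior, h]

theorem Su_paddedPRBox_le :
    Su paddedPRBox ≤ (((4 : ℕ) : ℝ≥0∞) ^ 2)⁻¹ * ENNReal.ofReal (4 * Real.log 2) := by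
  refine (iInf₂_le (uniformBehavior 2 4)
    ⟨uniformBehavior_isBehavior two_ne_zero, uniformBehavior_isLocal two_ne_zero⟩).trans ?_
  gcongr
  simp only [relEnt_paddedPRBox_uniformBehavior, Fin.sum_univ_four, Fin.isValue,
    Fin.coe_ofNat_eq_mod, Nat.reduceMod, Nat.zero_mod, Nat.one_mod, Nat.mod_succ, zero_le,
    Std.le_refl, Nat.not_ofNat_le_one, and_true, and_false, ↓reduceIte, add_zero, Nat.ofNat_nonneg,
    ENNReal.ofReal_mul, ENNReal.ofReal_ofNat]
  exact le_of_eq (by ring)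

/-- the uniform-input statistical strength `S_u` is not an LOSR
monotone. -/
theorem Su_not_LOSR_monotone :
    ∃ (r s : ℕ) (P : Fin r → Fin r → Fin s → Fin s → ℝ)
      (W : GlobalWiring r s r s),
      IsBehavior P ∧ NoSignaling P ∧ W.IsLOSR ∧ Su P < Su (W.apply P) := by
  refine ⟨2, 4, paddedPRBox, GlobalWiring.relabelInputs inputParity, paddedPRBox_isBehavior,
    paddedPRBox_noSignaling, GlobalWiring.isLOSR_relabelInputs _, ?_⟩
  rw [relabelInputs_inputParity_apply_paddedPRBox]
  refine Su_paddedPRBox_le.trans_lt (lt_of_lt_of_le ?_ le_Su_prBox)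
  refine ENNReal.mul_lt_mul_right (by simp) (by simp) ?_
  exact (ENNReal.ofReal_lt_ofReal_iff four_pos).2 (by linarith [Real.log_two_lt_d9])
end

section
/- UCLOSR monotonicity of the uncorrelated-input statistical strength: for every no-signaling behavior P in the (r,s) Bell scenario and every UCLOSR wiring W from the (r,s) scenario to the (r_f,s_f) scenario, S_uc(W(P)) ≤ S_uc(P). -/
open scoped ENNReal
open Finset

/-!
Given uncorrelated input distributions `D_A`, `D_B` of the wired scenario, feed the original
box the pulled-back inputs `∑ χ, I_A(x|χ) D_A(χ)` and `∑ ψ, I_B(y|ψ) D_B(ψ)`, again uncorrelated.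
A UCLOSR wiring maps local behaviors to local behaviors, so for every local `Q` the image `W(Q)`
competes in the infimum defining `S_uc(W(P))`. For fixed final inputs `(χ,ψ)`, `W(P)(·|χ,ψ)` is a
channel applied to the joint distribution `I(x,y|χ,ψ) P(a,b|x,y)`; the data-processing inequality
and the chain rule, both consequences of the log-sum inequality, bound its relative entropy to
`W(Q)(·|χ,ψ)` by the `I`-average of the relative entropies between `P` and `Q`.
-/

open Real

lemma mul_mul_log_mul_div_mul (t a b : ℝ) :
    t * a * log (t * a / (t * b)) = t * (a * log (a / b)) := by
  rcases eq_or_ne t 0 with rfl | ht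
  · simp
  · rw [mul_div_mul_left _ _ ht, mul_assoc]

theorem log_sum_le {ι : Type*} [Fintype ι] {a b : ι → ℝ} (ha : ∀ j, 0 ≤ a j)
    (hb : ∀ j, 0 ≤ b j) (hab : ∀ j, b j = 0 → a j = 0) :
    (∑ j, a j) * log ((∑ j, a j) / ∑ j, b j) ≤ ∑ j, a j * log (a j / b j) := by
  classical
  set A := ∑ j, a j
  set B := ∑ j, b j
  rcases (Finset.sum_nonneg fun j _ => hb j).eq_or_lt with hB | hB
  · have hb0 : ∀ j, b j = 0 := fun j =>
      (Finset.sum_eq_zero_iff_of_nonneg fun j _ => hb j).mp hB.symm j (mem_univ j)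
    simp [B, hb0, hab _ (hb0 _)]
  -- Jensen for `x log x`, weights `b j / B`, points `a j / b j`, over the support of `b`.
  set t := univ.filter fun j => b j ≠ 0
  have sum_t : ∀ f : ι → ℝ, (∀ j, b j = 0 → f j = 0) → ∑ j ∈ t, f j = ∑ j, f j := fun f hf =>
    Finset.sum_filter_of_ne fun j _ hfj hbj => hfj (hf j hbj)
  have jensen := convexOn_mul_log.map_sum_le (t := t) (w := fun j => b j / B)
    (p := fun j => a j / b j) (fun j _ => div_nonneg (hb j) hB.le)
    (by rw [← Finset.sum_div, sum_t b fun _ => id, div_self hB.ne'])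
    fun j _ => div_nonneg (ha j) (hb j)
  have hmean : ∑ j ∈ t, b j / B * (a j / b j) = A / B := by
    rw [Finset.sum_congr rfl fun j hj => by
      rw [div_mul_div_comm, mul_comm (b j), mul_div_mul_right _ _ (mem_filter.mp hj).2]]
    rw [← Finset.sum_div, sum_t a hab]
  have hrhs : ∑ j ∈ t, b j / B * (a j / b j * log (a j / b j)) =
      (∑ j, a j * log (a j / b j)) / B := by
    rw [Finset.sum_congr rfl fun j hj => by
      rw [← mul_assoc, div_mul_div_comm, mul_comm (b j),
        mul_div_mul_right _ _ (mem_filter.mp hj).2, div_mul_eq_mul_div]]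
    rw [← Finset.sum_div, sum_t _ fun j hj => by simp [hab j hj]]
  simp only [smul_eq_mul, hmean, hrhs] at jensen
  rwa [div_mul_eq_mul_div, div_le_div_iff_of_pos_right hB] at jensen

section RelEnt

variable {ι Z Z' : Type*} [Fintype ι] [Fintype Z] [Fintype Z']

lemma relEnt_of_absCont {p q : Z → ℝ} (h : ∀ z, q z = 0 → p z = 0) :
    relEnt p q = ENNReal.ofReal (∑ z, p z * log (p z / q z)) :=
  if_neg fun ⟨z, hp, hq⟩ => hp (h z hq)

lemma relEnt_of_not_absCont {p q : Z → ℝ} {z : Z} (hp : p z ≠ 0) (hq : q z = 0) :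
    relEnt p q = ⊤ :=
  if_pos ⟨z, hp, hq⟩

theorem relEnt_map_le {T : Z' → Z → ℝ} (hT : ∀ z' z, 0 ≤ T z' z)
    (hT1 : ∀ z, ∑ z', T z' z = 1) {μ ν : Z → ℝ} (hμ : ∀ z, 0 ≤ μ z) (hν : ∀ z, 0 ≤ ν z) :
    relEnt (fun z' => ∑ z, T z' z * μ z) (fun z' => ∑ z, T z' z * ν z) ≤ relEnt μ ν := by
  by_cases habs : ∀ z, ν z = 0 → μ z = 0
  swap
  · push Not at habs
    obtain ⟨z, hq, hp⟩ := habs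
    rw [relEnt_of_not_absCont hp hq]
    exact le_top
  have hterm : ∀ z' z, T z' z * ν z = 0 → T z' z * μ z = 0 := fun z' z h => by
    rcases mul_eq_zero.mp h with h | h <;> simp [h, habs]
  have habs' : ∀ z', ∑ z, T z' z * ν z = 0 → ∑ z, T z' z * μ z = 0 := fun z' h =>
    Finset.sum_eq_zero fun z _ => hterm z' z <|
      (Finset.sum_eq_zero_iff_of_nonneg fun z _ => mul_nonneg (hT z' z) (hν z)).mp h z
        (mem_univ z)
  rw [relEnt_of_absCont habs, relEnt_of_absCont habs']
  refine ENNReal.ofReal_le_ofReal ?_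
  calc ∑ z', (∑ z, T z' z * μ z) * log ((∑ z, T z' z * μ z) / ∑ z, T z' z * ν z)
      ≤ ∑ z', ∑ z, T z' z * μ z * log (T z' z * μ z / (T z' z * ν z)) :=
        sum_le_sum fun z' _ => log_sum_le (fun z => mul_nonneg (hT z' z) (hμ z))
          (fun z => mul_nonneg (hT z' z) (hν z)) (hterm z')
    _ = ∑ z, μ z * log (μ z / ν z) := by
        simp_rw [mul_mul_log_mul_div_mul]
        rw [sum_comm]
        simp_rw [← sum_mul, hT1, one_mul]

theorem relEnt_joint_le {w : ι → ℝ} (hw : ∀ i, 0 ≤ w i) (p q : ι → Z → ℝ) :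
    relEnt (fun j : ι × Z => w j.1 * p j.1 j.2) (fun j => w j.1 * q j.1 j.2) ≤
      ∑ i, ENNReal.ofReal (w i) * relEnt (p i) (q i) := by
  by_cases habs : ∀ i, w i ≠ 0 → ∀ z, q i z = 0 → p i z = 0
  swap
  · push Not at habs
    obtain ⟨i, hwi, z, hq, hp⟩ := habs
    refine le_top.trans_eq (ENNReal.sum_eq_top.mpr ⟨i, mem_univ i, ?_⟩).symm
    rw [relEnt_of_not_absCont hp hq, ENNReal.mul_top]
    exact ENNReal.ofReal_pos.mpr ((hw i).lt_of_ne' hwi) |>.ne'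
  have habs' : ∀ j : ι × Z, w j.1 * q j.1 j.2 = 0 → w j.1 * p j.1 j.2 = 0 :=
    fun ⟨i, z⟩ h => by
      rcases eq_or_ne (w i) 0 with hwi | hwi
      · simp [hwi]
      · simp [habs i hwi z ((mul_eq_zero.mp h).resolve_left hwi)]
  rw [relEnt_of_absCont habs']
  calc ENNReal.ofReal
        (∑ j : ι × Z, w j.1 * p j.1 j.2 * log (w j.1 * p j.1 j.2 / (w j.1 * q j.1 j.2)))
      = ENNReal.ofReal (∑ i, w i * ∑ z, p i z * log (p i z / q i z)) := by
        simp_rw [mul_mul_log_mul_div_mul, Fintype.sum_prod_type, mul_sum]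
    _ ≤ ∑ i, ENNReal.ofReal (w i * ∑ z, p i z * log (p i z / q i z)) :=
        le_sum_of_subadditive _ ENNReal.ofReal_zero.le (fun _ _ => ENNReal.ofReal_add_le) _ _
    _ ≤ ∑ i, ENNReal.ofReal (w i) * relEnt (p i) (q i) := by
        gcongr with i
        rcases eq_or_ne (w i) 0 with hwi | hwi
        · simp [hwi]
        · rw [ENNReal.ofReal_mul (hw i), relEnt_of_absCont (habs i hwi)]

end RelEnt

section IsDist

variable {ι Z Z' : Type*} [Fintype ι] [Fintype Z] [Fintype Z']

lemma IsDist.map {μ : Z → ℝ} (hμ : IsDist μ) {T : Z' → Z → ℝ} (hT : ∀ z, IsDist (T · z)) :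
    IsDist fun z' => ∑ z, T z' z * μ z := by
  refine ⟨fun z' => sum_nonneg fun z _ => mul_nonneg ((hT z).1 z') (hμ.1 z), ?_⟩
  rw [sum_comm]
  simp_rw [← sum_mul, (hT _).2, one_mul, hμ.2]

lemma IsDist.joint {w : ι → ℝ} (hw : IsDist w) {p : ι → Z → ℝ} (hp : ∀ i, IsDist (p i)) :
    IsDist fun j : ι × Z => w j.1 * p j.1 j.2 := by
  refine ⟨fun j => mul_nonneg (hw.1 j.1) ((hp j.1).1 j.2), ?_⟩
  rw [Fintype.sum_prod_type]
  simp_rw [← mul_sum, (hp _).2, mul_one, hw.2]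

end IsDist

lemma isBehavior_iff_isDist_outDist {r s : ℕ} {P : Fin r → Fin r → Fin s → Fin s → ℝ} :
    IsBehavior P ↔ ∀ x y, IsDist (outDist P x y) := by
  simp only [IsBehavior, IsDist, outDist, Fintype.sum_prod_type, Prod.forall]
  exact ⟨fun h x y => ⟨fun a b => h.1 a b x y, h.2 x y⟩,
    fun h => ⟨fun a b x y => (h x y).1 a b, fun x y => (h x y).2⟩⟩

namespace GlobalWiring

variable {r s rf sf : ℕ} (W : GlobalWiring r s rf sf)

lemma isDist_I (χ ψ : Fin sf) : IsDist fun xy : Fin s × Fin s => W.I xy.1 xy.2 χ ψ :=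
  ⟨fun _ => W.I_nonneg _ _ _ _, by rw [Fintype.sum_prod_type]; exact W.I_sum χ ψ⟩

lemma isDist_O (a b : Fin r) (x y : Fin s) (χ ψ : Fin sf) :
    IsDist fun αβ : Fin rf × Fin rf => W.O αβ.1 αβ.2 a b x y χ ψ :=
  ⟨fun _ => W.O_nonneg _ _ _ _ _ _ _ _, by rw [Fintype.sum_prod_type]; exact W.O_sum a b x y χ ψ⟩

lemma outDist_apply (R : Fin r → Fin r → Fin s → Fin s → ℝ) (χ ψ : Fin sf) :
    outDist (W.apply R) χ ψ = fun αβ => ∑ j : (Fin s × Fin s) × (Fin r × Fin r),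
      W.O αβ.1 αβ.2 j.2.1 j.2.2 j.1.1 j.1.2 χ ψ *
        (W.I j.1.1 j.1.2 χ ψ * outDist R j.1.1 j.1.2 j.2) := by
  funext αβ
  rw [Fintype.sum_prod_type_right]
  simp only [outDist, apply, Fintype.sum_prod_type, mul_assoc, mul_comm (W.I _ _ χ ψ)]

lemma isBehavior_apply {Q : Fin r → Fin r → Fin s → Fin s → ℝ} (hQ : IsBehavior Q) :
    IsBehavior (W.apply Q) := by
  rw [isBehavior_iff_isDist_outDist] at hQ ⊢
  intro χ ψ
  rw [outDist_apply]
  exact ((W.isDist_I χ ψ).joint fun xy => hQ xy.1 xy.2).map fun j => W.isDist_O _ _ _ _ χ ψ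

theorem relEnt_outDist_apply_le {P Q : Fin r → Fin r → Fin s → Fin s → ℝ}
    (hP : ∀ a b x y, 0 ≤ P a b x y) (hQ : ∀ a b x y, 0 ≤ Q a b x y) (χ ψ : Fin sf) :
    relEnt (outDist (W.apply P) χ ψ) (outDist (W.apply Q) χ ψ) ≤
      ∑ x, ∑ y, ENNReal.ofReal (W.I x y χ ψ) * relEnt (outDist P x y) (outDist Q x y) := by
  rw [outDist_apply, outDist_apply, ← Fintype.sum_prod_type']
  have hchain := relEnt_joint_le (w := fun xy : Fin s × Fin s => W.I xy.1 xy.2 χ ψ)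
    (fun _ => W.I_nonneg _ _ _ _) (fun xy => outDist P xy.1 xy.2) fun xy => outDist Q xy.1 xy.2
  refine le_trans ?_ hchain
  apply relEnt_map_le
  · exact fun _ _ => W.O_nonneg _ _ _ _ _ _ _ _
  · exact fun _ => (W.isDist_O _ _ _ _ χ ψ).2
  · exact fun _ => mul_nonneg (W.I_nonneg _ _ _ _) (hP _ _ _ _)
  · exact fun _ => mul_nonneg (W.I_nonneg _ _ _ _) (hQ _ _ _ _)

theorem sum_ofReal_mul_relEnt_apply_le {P Q : Fin r → Fin r → Fin s → Fin s → ℝ}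
    (hP : ∀ a b x y, 0 ≤ P a b x y) (hQ : ∀ a b x y, 0 ≤ Q a b x y)
    {D : Fin sf → Fin sf → ℝ} (hD : ∀ χ ψ, 0 ≤ D χ ψ) :
    ∑ χ, ∑ ψ, ENNReal.ofReal (D χ ψ) *
        relEnt (outDist (W.apply P) χ ψ) (outDist (W.apply Q) χ ψ) ≤
      ∑ x, ∑ y, ENNReal.ofReal (∑ χ, ∑ ψ, D χ ψ * W.I x y χ ψ) *
        relEnt (outDist P x y) (outDist Q x y) := by
  calc _ ≤ ∑ χ, ∑ ψ, ENNReal.ofReal (D χ ψ) * ∑ x, ∑ y, ENNReal.ofReal (W.I x y χ ψ) *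
          relEnt (outDist P x y) (outDist Q x y) := by
        gcongr with χ _ ψ
        exact W.relEnt_outDist_apply_le hP hQ χ ψ
    _ = _ := by
        have hDI : ∀ x y χ ψ, 0 ≤ D χ ψ * W.I x y χ ψ := fun x y χ ψ =>
          mul_nonneg (hD χ ψ) (W.I_nonneg x y χ ψ)
        simp only [mul_sum, sum_mul, ← mul_assoc, ← ENNReal.ofReal_mul (hD _ _),
          ENNReal.ofReal_sum_of_nonneg fun _ _ => sum_nonneg fun _ _ => hDI _ _ _ _,
          ENNReal.ofReal_sum_of_nonneg fun _ _ => hDI _ _ _ _]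
        simp only [Finset.sum_comm (γ := Fin sf) (α := Fin s)]

variable {W}

theorem IsUCLOSR.isLocal_apply (hW : W.IsUCLOSR)
    {Q : Fin r → Fin r → Fin s → Fin s → ℝ} (hQ : IsLocal Q) : IsLocal (W.apply Q) := by
  obtain ⟨IA, IB, OA, OB, hIA, hIB, hOA, hOB, hI, hO⟩ := hW
  obtain ⟨n, q, QA, QB, hq, hQA, hQB, hQ⟩ := hQ
  refine ⟨n, q, fun α χ l => ∑ j : Fin s × Fin r, OA α j.2 j.1 χ * (IA j.1 χ * QA j.2 j.1 l),
    fun β ψ l => ∑ j : Fin s × Fin r, OB β j.2 j.1 ψ * (IB j.1 ψ * QB j.2 j.1 l), hq,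
    fun χ l => (IsDist.joint (hIA χ) fun x => hQA x l).map fun j => hOA j.2 j.1 χ,
    fun ψ l => (IsDist.joint (hIB ψ) fun y => hQB y l).map fun j => hOB j.2 j.1 ψ,
    fun α β χ ψ => ?_⟩
  simp only [apply, hI, hO, hQ, Fintype.sum_prod_type, mul_sum, sum_mul]
  simp only [Finset.sum_comm (α := Fin n), Finset.sum_comm (γ := Fin r) (α := Fin s)]
  refine sum_congr rfl fun l _ => ?_
  rw [Finset.sum_comm]
  refine sum_congr rfl fun y _ => sum_congr rfl fun x _ => ?_
  rw [Finset.sum_comm]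
  exact sum_congr rfl fun b _ => sum_congr rfl fun a _ => by ring

end GlobalWiring

theorem Suc_UCLOSR_monotone_general {r s rf sf : ℕ}
    (P : Fin r → Fin r → Fin s → Fin s → ℝ)
    (hP : IsBehavior P)
    (W : GlobalWiring r s rf sf) (hW : W.IsUCLOSR) :
    Suc (W.apply P) ≤ Suc P := by
  have hloc : ∀ Q, IsLocal Q → IsLocal (W.apply Q) := fun _ => hW.isLocal_apply
  obtain ⟨IA, IB, -, -, hIA, hIB, -, -, hI, -⟩ := hW
  refine iSup₂_le fun DA DB => iSup_le fun hD => ?_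
  refine le_iSup₂_of_le (fun x => ∑ χ, IA x χ * DA χ) (fun y => ∑ ψ, IB y ψ * DB ψ) <|
    le_iSup_of_le ⟨hD.1.map hIA, hD.2.map hIB⟩ <| le_iInf₂ fun Q hQ => ?_
  refine iInf₂_le_of_le (W.apply Q) ⟨W.isBehavior_apply hQ.1, hloc Q hQ.2⟩ ?_
  refine (W.sum_ofReal_mul_relEnt_apply_le hP.1 hQ.1.1
    fun χ ψ => mul_nonneg (hD.1.1 χ) (hD.2.1 ψ)).trans_eq ?_
  refine sum_congr rfl fun x _ => sum_congr rfl fun y _ => ?_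
  rw [Fintype.sum_mul_sum]
  congr 2
  exact sum_congr rfl fun χ _ => sum_congr rfl fun ψ _ => by rw [hI]; ring

/-- UCLOSR monotonicity of the uncorrelated-input statistical
strength. -/
theorem Suc_UCLOSR_monotone {r s rf sf : ℕ} (hrf : 0 < rf)
    (P : Fin r → Fin r → Fin s → Fin s → ℝ)
    (hP : IsBehavior P) (hPns : NoSignaling P)
    (W : GlobalWiring r s rf sf) (hW : W.IsUCLOSR) :
    Suc (W.apply P) ≤ Suc P :=
  Suc_UCLOSR_monotone_general P hP W hW
end

section
/- Every LOSR wiring is a convex combination of UCLOSR wirings: for any LOSR wiring W from the (r,s) scenario to the (r_f,s_f) scenario, there exist a finite set Λ, a probability distribution q on Λ, and UCLOSR wirings W_λ (λ ∈ Λ) from the (r,s) scenario to the (r_f,s_f) scenario such that for every behavior P and all α,β,χ,ψ, W(P)(α,β|χ,ψ) = ∑_{λ∈Λ} q(λ)·W_λ(P)(α,β|χ,ψ). -/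
open scoped ENNReal
open Finset

private lemma sum_swap5 {A B C D K : Type*} [Fintype A] [Fintype B] [Fintype C]
    [Fintype D] [Fintype K] (f : A → B → C → D → K → ℝ) :
    ∑ a, ∑ b, ∑ c, ∑ d, ∑ k, f a b c d k
      = ∑ k, ∑ a, ∑ b, ∑ c, ∑ d, f a b c d k := by
  calc ∑ a, ∑ b, ∑ c, ∑ d, ∑ k, f a b c d k
      = ∑ a, ∑ b, ∑ c, ∑ k, ∑ d, f a b c d k :=
        Finset.sum_congr rfl fun a _ => Finset.sum_congr rfl fun b _ =>
          Finset.sum_congr rfl fun c _ => Finset.sum_comm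
    _ = ∑ a, ∑ b, ∑ k, ∑ c, ∑ d, f a b c d k :=
        Finset.sum_congr rfl fun a _ => Finset.sum_congr rfl fun b _ =>
          Finset.sum_comm
    _ = ∑ a, ∑ k, ∑ b, ∑ c, ∑ d, f a b c d k :=
        Finset.sum_congr rfl fun a _ => Finset.sum_comm
    _ = ∑ k, ∑ a, ∑ b, ∑ c, ∑ d, f a b c d k := Finset.sum_comm

/-- every LOSR wiring is a convex combination of UCLOSR
wirings. -/
theorem LOSR_convex_combination_UCLOSR {r s rf sf : ℕ}
    (W : GlobalWiring r s rf sf) (hW : W.IsLOSR) :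
    ∃ (n : ℕ) (q : Fin n → ℝ) (Ws : Fin n → GlobalWiring r s rf sf),
      IsDist q ∧ (∀ l, (Ws l).IsUCLOSR) ∧
      ∀ P : Fin r → Fin r → Fin s → Fin s → ℝ, IsBehavior P →
        ∀ α β χ ψ, W.apply P α β χ ψ = ∑ l, q l * (Ws l).apply P α β χ ψ := by

  obtain ⟨n, m, q, q', IA, IB, OA, OB, hq, hq', hIA, hIB, hOA, hOB, hI, hO⟩ := hW
  set e : Fin n × Fin m ≃ Fin (n * m) := finProdFinEquiv with he
  refine ⟨n * m, fun k => q (e.symm k).1 * q' (e.symm k).2,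
    fun k =>
      { I := fun x y χ ψ => IA x χ (e.symm k).1 * IB y ψ (e.symm k).1
        O := fun α β a b x y χ ψ =>
          OA α a x χ (e.symm k).2 * OB β b y ψ (e.symm k).2
        I_nonneg := fun x y χ ψ =>
          mul_nonneg ((hIA χ _).1 x) ((hIB ψ _).1 y)
        I_sum := fun χ ψ => by
          rw [← Finset.sum_mul_sum, (hIA χ _).2, (hIB ψ _).2, one_mul]
        O_nonneg := fun α β a b x y χ ψ =>
          mul_nonneg ((hOA a x χ _).1 α) ((hOB b y ψ _).1 β)
        O_sum := fun a b x y χ ψ => by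
          rw [← Finset.sum_mul_sum, (hOA a x χ _).2, (hOB b y ψ _).2, one_mul] },
    ?_, ?_, ?_⟩
  · constructor
    · intro k
      exact mul_nonneg (hq.1 _) (hq'.1 _)
    · rw [Equiv.sum_comp e.symm (fun p : Fin n × Fin m => q p.1 * q' p.2)]
      rw [Fintype.sum_prod_type, ← Finset.sum_mul_sum, hq.2, hq'.2, one_mul]
  · intro k
    exact ⟨fun x χ => IA x χ (e.symm k).1, fun y ψ => IB y ψ (e.symm k).1,
      fun α a x χ => OA α a x χ (e.symm k).2, fun β b y ψ => OB β b y ψ (e.symm k).2,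
      fun χ => hIA χ _, fun ψ => hIB ψ _, fun a x χ => hOA a x χ _,
      fun b y ψ => hOB b y ψ _, fun _ _ _ _ => rfl, fun _ _ _ _ _ _ _ _ => rfl⟩
  · intro P hP α β χ ψ
    have key : ∀ a b x y, W.O α β a b x y χ ψ * P a b x y * W.I x y χ ψ
        = ∑ p : Fin n × Fin m, (q p.1 * q' p.2) *
            (OA α a x χ p.2 * OB β b y ψ p.2 * P a b x y *
              (IA x χ p.1 * IB y ψ p.1)) := by
      intro a b x y
      rw [hO, hI, Fintype.sum_prod_type]
      rw [Finset.sum_mul, Finset.sum_mul, Finset.sum_comm]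
      refine Finset.sum_congr rfl fun u _ => ?_
      rw [Finset.mul_sum]
      refine Finset.sum_congr rfl fun l _ => ?_
      ring
    show (∑ a, ∑ b, ∑ x, ∑ y, W.O α β a b x y χ ψ * P a b x y * W.I x y χ ψ) = _
    simp only [key]
    rw [sum_swap5 (fun a b x y (p : Fin n × Fin m) => (q p.1 * q' p.2) *
            (OA α a x χ p.2 * OB β b y ψ p.2 * P a b x y *
              (IA x χ p.1 * IB y ψ p.1)))]
    rw [← Equiv.sum_comp e.symm (fun p : Fin n × Fin m => ∑ a, ∑ b, ∑ x, ∑ y,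
      (q p.1 * q' p.2) * (OA α a x χ p.2 * OB β b y ψ p.2 * P a b x y *
        (IA x χ p.1 * IB y ψ p.1)))]
    refine Finset.sum_congr rfl fun k _ => ?_
    show _ = _ * GlobalWiring.apply _ P α β χ ψ
    unfold GlobalWiring.apply
    simp only [Finset.mul_sum]
end

section
/- Convexity of the uncorrelated-input statistical strength: for any two behaviors P, P' in the same (r,s) Bell scenario and any μ ∈ [0,1], S_uc(μ·P + (1−μ)·P') ≤ μ·S_uc(P) + (1−μ)·S_uc(P'), where μ·P + (1−μ)·P' denotes the entrywise convex combination (itself a behavior). -/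
open scoped ENNReal
open Finset

/-!
Relative entropy is jointly convex: for two-point mixtures this is the log-sum inequality
`(a + b) log ((a + b) / (c + d)) ≤ a log (a / c) + b log (b / d)`, i.e. convexity of the
perspective of `x ↦ x log x`. A mixture of local behaviors is local (take the disjoint union of
the hidden-variable spaces). Hence, for every choice of input weights, mixing local models
`Q`, `Q'` of `P`, `P'` gives a local model of the mixture whose weighted divergence is at most
the mixture of the divergences; passing to the infimum over `Q`, `Q'` and then to the supremum
over the weights gives the claim.
-/

open Real in
lemma mul_log_div_add_le {a b c d : ℝ} (ha : 0 ≤ a) (hb : 0 ≤ b) (hc : 0 ≤ c) (hd : 0 ≤ d)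
    (hac : c = 0 → a = 0) (hbd : d = 0 → b = 0) :
    (a + b) * log ((a + b) / (c + d)) ≤ a * log (a / c) + b * log (b / d) := by
  rcases hc.eq_or_lt with rfl | hc
  · simp [hac rfl]
  rcases hd.eq_or_lt with rfl | hd
  · simp [hbd rfl]
  have hcd : 0 < c + d := add_pos hc hd
  have hconv := convexOn_mul_log.2 (Set.mem_Ici.2 (div_nonneg ha hc.le))
    (Set.mem_Ici.2 (div_nonneg hb hd.le)) (div_nonneg hc.le hcd.le) (div_nonneg hd.le hcd.le)
    (by field_simp)
  have hmid : c / (c + d) * (a / c) + d / (c + d) * (b / d) = (a + b) / (c + d) := by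
    field_simp
  simp only [smul_eq_mul, hmid] at hconv
  calc (a + b) * log ((a + b) / (c + d))
      = (c + d) * ((a + b) / (c + d) * log ((a + b) / (c + d))) := by field_simp
    _ ≤ (c + d) * (c / (c + d) * (a / c * log (a / c)) + d / (c + d) * (b / d * log (b / d))) :=
      mul_le_mul_of_nonneg_left hconv hcd.le
    _ = a * log (a / c) + b * log (b / d) := by field_simp

open ENNReal in
lemma relEnt_convexComb_le {Z : Type*} [Fintype Z] {μ : ℝ} (hμ0 : 0 < μ) (hμ1 : μ < 1)
    {p p' q q' : Z → ℝ} (hp : ∀ z, 0 ≤ p z) (hp' : ∀ z, 0 ≤ p' z) (hq : ∀ z, 0 ≤ q z)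
    (hq' : ∀ z, 0 ≤ q' z) :
    relEnt (fun z => μ * p z + (1 - μ) * p' z) (fun z => μ * q z + (1 - μ) * q' z) ≤
      ENNReal.ofReal μ * relEnt p q + ENNReal.ofReal (1 - μ) * relEnt p' q' := by
  have hν : 0 < 1 - μ := sub_pos.2 hμ1
  by_cases hinf : (∃ z, p z ≠ 0 ∧ q z = 0) ∨ ∃ z, p' z ≠ 0 ∧ q' z = 0
  · rcases hinf with h | h
    · simp [relEnt, h, mul_top (ofReal_pos.2 hμ0).ne']
    · simp [relEnt, h, mul_top (ofReal_pos.2 hν).ne']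
  push Not at hinf
  obtain ⟨hpq, hpq'⟩ := hinf
  have hqp (z) : q z = 0 → p z = 0 := not_imp_not.1 (hpq z)
  have hqp' (z) : q' z = 0 → p' z = 0 := not_imp_not.1 (hpq' z)
  have hfin : ¬ ∃ z, μ * p z + (1 - μ) * p' z ≠ 0 ∧ μ * q z + (1 - μ) * q' z = 0 := by
    rintro ⟨z, hpz, hqz⟩
    have hq0 : q z = 0 := by nlinarith [mul_nonneg hμ0.le (hq z), mul_nonneg hν.le (hq' z)]
    have hq0' : q' z = 0 := by nlinarith [mul_nonneg hμ0.le (hq z), mul_nonneg hν.le (hq' z)]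
    simp [hqp z hq0, hqp' z hq0'] at hpz
  rw [relEnt, relEnt, relEnt, if_neg hfin, if_neg (by push Not; exact hpq),
    if_neg (by push Not; exact hpq'), ← ofReal_mul hμ0.le, ← ofReal_mul hν.le]
  refine (ofReal_le_ofReal ?_).trans ofReal_add_le
  rw [Finset.mul_sum, Finset.mul_sum, ← Finset.sum_add_distrib]
  gcongr with z
  have h := mul_log_div_add_le (mul_nonneg hμ0.le (hp z)) (mul_nonneg hν.le (hp' z))
    (mul_nonneg hμ0.le (hq z)) (mul_nonneg hν.le (hq' z))
    (fun h => by rw [hqp z ((mul_eq_zero.1 h).resolve_left hμ0.ne'), mul_zero])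
    (fun h => by rw [hqp' z ((mul_eq_zero.1 h).resolve_left hν.ne'), mul_zero])
  rwa [mul_div_mul_left _ _ hμ0.ne', mul_div_mul_left _ _ hν.ne', mul_assoc, mul_assoc] at h

def convexComb {r s : ℕ} (μ : ℝ) (P P' : Fin r → Fin r → Fin s → Fin s → ℝ) :
    Fin r → Fin r → Fin s → Fin s → ℝ :=
  fun a b x y => μ * P a b x y + (1 - μ) * P' a b x y

section convexComb

variable {r s : ℕ} {μ : ℝ} {P P' : Fin r → Fin r → Fin s → Fin s → ℝ}

lemma IsBehavior.convexComb (hP : IsBehavior P) (hP' : IsBehavior P') (hμ0 : 0 ≤ μ)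
    (hμ1 : μ ≤ 1) : IsBehavior (convexComb μ P P') := by
  refine ⟨fun a b x y => ?_, fun x y => ?_⟩
  · have := hP.1 a b x y
    have := hP'.1 a b x y
    unfold _root_.convexComb
    positivity
  · simp only [_root_.convexComb, Finset.sum_add_distrib, ← Finset.mul_sum, hP.2, hP'.2]
    ring

lemma IsLocal.convexComb (hP : IsLocal P) (hP' : IsLocal P') (hμ0 : 0 ≤ μ) (hμ1 : μ ≤ 1) :
    IsLocal (convexComb μ P P') := by
  obtain ⟨n, q, PA, PB, hq, hPA, hPB, hrep⟩ := hP
  obtain ⟨n', q', PA', PB', hq', hPA', hPB', hrep'⟩ := hP'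
  refine ⟨n + n', Fin.addCases (fun i => μ * q i) (fun j => (1 - μ) * q' j),
    fun a x => Fin.addCases (PA a x) (PA' a x), fun b y => Fin.addCases (PB b y) (PB' b y),
    ⟨fun l => ?_, ?_⟩, fun x l => ?_, fun y l => ?_, fun a b x y => ?_⟩
  · refine Fin.addCases (fun i => ?_) (fun j => ?_) l
    · simpa using mul_nonneg hμ0 (hq.1 i)
    · simpa using mul_nonneg (sub_nonneg.2 hμ1) (hq'.1 j)
  · simp [Fin.sum_univ_add, ← Finset.mul_sum, hq.2, hq'.2]
  · refine Fin.addCases (fun i => ?_) (fun j => ?_) l <;> simp [hPA, hPA']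
  · refine Fin.addCases (fun i => ?_) (fun j => ?_) l <;> simp [hPB, hPB']
  · simp only [_root_.convexComb, hrep, hrep', Fin.sum_univ_add, Fin.addCases_left,
      Fin.addCases_right, Finset.mul_sum, mul_assoc]

end convexComb

section weighted

variable {r s : ℕ}

noncomputable def weightedRelEnt (w : Fin s → Fin s → ℝ≥0∞)
    (P Q : Fin r → Fin r → Fin s → Fin s → ℝ) : ℝ≥0∞ :=
  ∑ x, ∑ y, w x y * relEnt (outDist P x y) (outDist Q x y)

noncomputable def localRelEnt (w : Fin s → Fin s → ℝ≥0∞)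
    (P : Fin r → Fin r → Fin s → Fin s → ℝ) : ℝ≥0∞ :=
  ⨅ (Q : Fin r → Fin r → Fin s → Fin s → ℝ) (_ : IsBehavior Q ∧ IsLocal Q), weightedRelEnt w P Q

variable {w : Fin s → Fin s → ℝ≥0∞} {μ : ℝ} {P P' Q Q' : Fin r → Fin r → Fin s → Fin s → ℝ}

lemma weightedRelEnt_convexComb_le (hμ0 : 0 < μ) (hμ1 : μ < 1) (hP : IsBehavior P)
    (hP' : IsBehavior P') (hQ : IsBehavior Q) (hQ' : IsBehavior Q') :
    weightedRelEnt w (convexComb μ P P') (convexComb μ Q Q') ≤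
      ENNReal.ofReal μ * weightedRelEnt w P Q +
        ENNReal.ofReal (1 - μ) * weightedRelEnt w P' Q' := by
  simp only [weightedRelEnt, Finset.mul_sum, ← Finset.sum_add_distrib]
  gcongr with x _ y _
  calc w x y * relEnt (outDist (convexComb μ P P') x y) (outDist (convexComb μ Q Q') x y)
      ≤ w x y * (ENNReal.ofReal μ * relEnt (outDist P x y) (outDist Q x y) +
          ENNReal.ofReal (1 - μ) * relEnt (outDist P' x y) (outDist Q' x y)) := by
        gcongr
        exact relEnt_convexComb_le hμ0 hμ1 (fun z => hP.1 z.1 z.2 x y)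
          (fun z => hP'.1 z.1 z.2 x y) (fun z => hQ.1 z.1 z.2 x y) (fun z => hQ'.1 z.1 z.2 x y)
    _ = _ := by ring

lemma localRelEnt_convexComb_le (hμ0 : 0 < μ) (hμ1 : μ < 1) (hP : IsBehavior P)
    (hP' : IsBehavior P') :
    localRelEnt w (convexComb μ P P') ≤
      ENNReal.ofReal μ * localRelEnt w P + ENNReal.ofReal (1 - μ) * localRelEnt w P' := by
  have hν : 0 < 1 - μ := sub_pos.2 hμ1
  simp only [localRelEnt,
    ENNReal.mul_iInf_of_ne (ENNReal.ofReal_pos.2 hμ0).ne' ENNReal.ofReal_ne_top,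
    ENNReal.mul_iInf_of_ne (ENNReal.ofReal_pos.2 hν).ne' ENNReal.ofReal_ne_top]
  refine ENNReal.le_iInf₂_add_iInf₂ fun Q hQ Q' hQ' => ?_
  exact iInf₂_le_of_le (convexComb μ Q Q')
    ⟨hQ.1.convexComb hQ'.1 hμ0.le hμ1.le, hQ.2.convexComb hQ'.2 hμ0.le hμ1.le⟩
    (weightedRelEnt_convexComb_le hμ0 hμ1 hP hP' hQ.1 hQ'.1)

end weighted

/-- convexity of the uncorrelated-input statistical strength. -/
theorem Suc_convex {r s : ℕ}
    (P P' : Fin r → Fin r → Fin s → Fin s → ℝ)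
    (hP : IsBehavior P) (hP' : IsBehavior P')
    (μ : ℝ) (hμ0 : 0 ≤ μ) (hμ1 : μ ≤ 1) :
    Suc (fun a b x y => μ * P a b x y + (1 - μ) * P' a b x y) ≤
      ENNReal.ofReal μ * Suc P + ENNReal.ofReal (1 - μ) * Suc P' := by
  -- At the endpoints the mixture is `P'` or `P`; only in the interior are both
  -- coefficients nonzero, as needed to distribute them over the infima (`0 * ⊤ = 0`).
  rcases hμ0.eq_or_lt with rfl | hμ0
  · simp
  rcases hμ1.eq_or_lt with rfl | hμ1
  · simp
  -- `Suc P` is, by definition, the supremum of `localRelEnt` over product weights.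
  refine iSup₂_le fun DA DB => iSup_le fun hD => ?_
  refine (localRelEnt_convexComb_le (w := fun x y => ENNReal.ofReal (DA x * DB y))
    hμ0 hμ1 hP hP').trans ?_
  gcongr <;> exact le_iSup₂_of_le DA DB (le_iSup_of_le hD le_rfl)
end

section
/- LOSR wirings preserve locality: if P is a local behavior in the (r,s) Bell scenario and W is an LOSR wiring from the (r,s) scenario to the (r_f,s_f) scenario, then W(P) is a local behavior in the (r_f,s_f) scenario. -/
open scoped ENNReal
open Finset

section SwapLemmas

variable {A B C D E F : Type*} [Fintype A] [Fintype B] [Fintype C] [Fintype D]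
  [Fintype E] [Fintype F]

private lemma sw2 (f : A → B → C → ℝ) :
    (∑ a, ∑ b, ∑ c, f a b c) = ∑ c, ∑ a, ∑ b, f a b c := by
  rw [show (∑ a, ∑ b, ∑ c, f a b c) = ∑ a, ∑ c, ∑ b, f a b c from
    Finset.sum_congr rfl fun a _ => Finset.sum_comm]
  exact Finset.sum_comm

private lemma sw3 (f : A → B → C → D → ℝ) :
    (∑ a, ∑ b, ∑ c, ∑ d, f a b c d) = ∑ d, ∑ a, ∑ b, ∑ c, f a b c d := by
  rw [show (∑ a, ∑ b, ∑ c, ∑ d, f a b c d) = ∑ a, ∑ d, ∑ b, ∑ c, f a b c d from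
    Finset.sum_congr rfl fun a _ => sw2 _]
  exact Finset.sum_comm

private lemma sw4 (f : A → B → C → D → E → ℝ) :
    (∑ a, ∑ b, ∑ c, ∑ d, ∑ e, f a b c d e)
      = ∑ e, ∑ a, ∑ b, ∑ c, ∑ d, f a b c d e := by
  rw [show (∑ a, ∑ b, ∑ c, ∑ d, ∑ e, f a b c d e)
      = ∑ a, ∑ e, ∑ b, ∑ c, ∑ d, f a b c d e from
    Finset.sum_congr rfl fun a _ => sw3 _]
  exact Finset.sum_comm

private lemma sw5 (f : A → B → C → D → E → F → ℝ) :
    (∑ a, ∑ b, ∑ c, ∑ d, ∑ e, ∑ g, f a b c d e g)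
      = ∑ g, ∑ a, ∑ b, ∑ c, ∑ d, ∑ e, f a b c d e g := by
  rw [show (∑ a, ∑ b, ∑ c, ∑ d, ∑ e, ∑ g, f a b c d e g)
      = ∑ a, ∑ g, ∑ b, ∑ c, ∑ d, ∑ e, f a b c d e g from
    Finset.sum_congr rfl fun a _ => sw4 _]
  exact Finset.sum_comm

end SwapLemmas

/-- LOSR wirings preserve locality. -/
theorem LOSR_preserves_local {r s rf sf : ℕ}
    (P : Fin r → Fin r → Fin s → Fin s → ℝ)
    (hP : IsBehavior P) (hPloc : IsLocal P)
    (W : GlobalWiring r s rf sf) (hW : W.IsLOSR) :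
    IsBehavior (W.apply P) ∧ IsLocal (W.apply P) := by
  obtain ⟨n, qP, PA, PB, hqP, hPA, hPB, hPeq⟩ := hPloc
  obtain ⟨nI, m, qI, qO, IA, IB, OA, OB, hqI, hqO, hIA, hIB, hOA, hOB, hIeq, hOeq⟩ := hW
  constructor
  · -- IsBehavior
    constructor
    · intro α β χ ψ
      refine Finset.sum_nonneg fun a _ => Finset.sum_nonneg fun b _ =>
        Finset.sum_nonneg fun x _ => Finset.sum_nonneg fun y _ => ?_
      exact mul_nonneg (mul_nonneg (W.O_nonneg _ _ _ _ _ _ _ _) (hP.1 _ _ _ _))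
        (W.I_nonneg _ _ _ _)
    · intro χ ψ
      show (∑ α, ∑ β, ∑ a, ∑ b, ∑ x, ∑ y,
        W.O α β a b x y χ ψ * P a b x y * W.I x y χ ψ) = 1
      rw [show (∑ α, ∑ β, ∑ a, ∑ b, ∑ x, ∑ y,
          W.O α β a b x y χ ψ * P a b x y * W.I x y χ ψ)
          = ∑ β, ∑ a, ∑ b, ∑ x, ∑ y, ∑ α,
            W.O α β a b x y χ ψ * P a b x y * W.I x y χ ψ from
        (sw5 fun β a b x y α => W.O α β a b x y χ ψ * P a b x y * W.I x y χ ψ).symm]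
      rw [show (∑ β, ∑ a, ∑ b, ∑ x, ∑ y, ∑ α,
          W.O α β a b x y χ ψ * P a b x y * W.I x y χ ψ)
          = ∑ a, ∑ b, ∑ x, ∑ y, ∑ α, ∑ β,
            W.O α β a b x y χ ψ * P a b x y * W.I x y χ ψ from
        (sw5 fun a b x y α β => W.O α β a b x y χ ψ * P a b x y * W.I x y χ ψ).symm]
      have h1 : ∀ a b x y, (∑ α, ∑ β,
          W.O α β a b x y χ ψ * P a b x y * W.I x y χ ψ)
          = P a b x y * W.I x y χ ψ := by
        intro a b x y
        simp only [mul_assoc, ← Finset.sum_mul]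
        rw [W.O_sum, one_mul]
      simp only [h1]
      rw [show (∑ a, ∑ b, ∑ x, ∑ y, P a b x y * W.I x y χ ψ)
          = ∑ b, ∑ x, ∑ y, ∑ a, P a b x y * W.I x y χ ψ from
        (sw3 fun b x y a => P a b x y * W.I x y χ ψ).symm]
      rw [show (∑ b, ∑ x, ∑ y, ∑ a, P a b x y * W.I x y χ ψ)
          = ∑ x, ∑ y, ∑ a, ∑ b, P a b x y * W.I x y χ ψ from
        (sw3 fun x y a b => P a b x y * W.I x y χ ψ).symm]
      have h2 : ∀ x y, (∑ a, ∑ b, P a b x y * W.I x y χ ψ) = W.I x y χ ψ := by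
        intro x y
        simp only [← Finset.sum_mul]
        rw [hP.2, one_mul]
      simp only [h2]
      exact W.I_sum χ ψ
  · -- IsLocal
    set Qf : Fin m × Fin nI × Fin n → ℝ := fun w => qO w.1 * qI w.2.1 * qP w.2.2 with hQf
    set Af : Fin rf → Fin sf → (Fin m × Fin nI × Fin n) → ℝ := fun α χ w =>
      ∑ a, ∑ x, OA α a x χ w.1 * IA x χ w.2.1 * PA a x w.2.2 with hAf
    set Bf : Fin rf → Fin sf → (Fin m × Fin nI × Fin n) → ℝ := fun β ψ w =>
      ∑ b, ∑ y, OB β b y ψ w.1 * IB y ψ w.2.1 * PB b y w.2.2 with hBf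
    have key : ∀ α β χ ψ, W.apply P α β χ ψ
        = ∑ w : Fin m × Fin nI × Fin n, Qf w * Af α χ w * Bf β ψ w := by
      intro α β χ ψ
      have e2 : ∀ a x b y, W.O α β a b x y χ ψ * P a b x y * W.I x y χ ψ
          = ∑ w : Fin m × Fin nI × Fin n,
            (qO w.1 * OA α a x χ w.1 * OB β b y ψ w.1)
            * (qI w.2.1 * IA x χ w.2.1 * IB y ψ w.2.1)
            * (qP w.2.2 * PA a x w.2.2 * PB b y w.2.2) := by
        intro a x b y
        rw [hOeq, hPeq, hIeq]
        simp only [Fintype.sum_prod_type]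
        rw [Finset.sum_mul_sum, Finset.sum_mul_sum]
        refine Finset.sum_congr rfl fun u _ => Finset.sum_congr rfl fun v _ => ?_
        rw [Finset.sum_mul]
        refine Finset.sum_congr rfl fun l _ => by ring
      have hstep : ∀ (c : ℝ) (f : Fin r → Fin s → ℝ) (d : ℝ),
          c * (∑ a, ∑ x, f a x) * d = ∑ a, ∑ x, c * f a x * d := by
        intro c f d
        rw [Finset.mul_sum, Finset.sum_mul]
        refine Finset.sum_congr rfl fun a _ => ?_
        rw [Finset.mul_sum, Finset.sum_mul]
      have hstep2 : ∀ (c : ℝ) (g : Fin r → Fin s → ℝ),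
          c * (∑ b, ∑ y, g b y) = ∑ b, ∑ y, c * g b y := by
        intro c g
        rw [Finset.mul_sum]
        exact Finset.sum_congr rfl fun b _ => Finset.mul_sum _ _ _
      calc W.apply P α β χ ψ
          = ∑ a, ∑ x, ∑ b, ∑ y,
              W.O α β a b x y χ ψ * P a b x y * W.I x y χ ψ :=
            Finset.sum_congr rfl fun a _ => Finset.sum_comm
        _ = ∑ a, ∑ x, ∑ b, ∑ y, ∑ w : Fin m × Fin nI × Fin n,
              (qO w.1 * OA α a x χ w.1 * OB β b y ψ w.1)
              * (qI w.2.1 * IA x χ w.2.1 * IB y ψ w.2.1)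
              * (qP w.2.2 * PA a x w.2.2 * PB b y w.2.2) := by
            refine Finset.sum_congr rfl fun a _ => Finset.sum_congr rfl fun x _ =>
              Finset.sum_congr rfl fun b _ => Finset.sum_congr rfl fun y _ => e2 a x b y
        _ = ∑ w : Fin m × Fin nI × Fin n, ∑ a, ∑ x, ∑ b, ∑ y,
              (qO w.1 * OA α a x χ w.1 * OB β b y ψ w.1)
              * (qI w.2.1 * IA x χ w.2.1 * IB y ψ w.2.1)
              * (qP w.2.2 * PA a x w.2.2 * PB b y w.2.2) := sw4 _
        _ = ∑ w : Fin m × Fin nI × Fin n, Qf w * Af α χ w * Bf β ψ w := by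
            refine Finset.sum_congr rfl fun w _ => ?_
            rw [hQf, hAf, hBf]
            rw [hstep]
            refine Finset.sum_congr rfl fun a _ => Finset.sum_congr rfl fun x _ => ?_
            rw [hstep2]
            refine Finset.sum_congr rfl fun b _ => Finset.sum_congr rfl fun y _ => by ring
    -- package with Fin N index
    let e := Fintype.equivFin (Fin m × Fin nI × Fin n)
    refine ⟨Fintype.card (Fin m × Fin nI × Fin n), fun k => Qf (e.symm k),
      fun α χ k => Af α χ (e.symm k), fun β ψ k => Bf β ψ (e.symm k), ?_, ?_, ?_, ?_⟩
    · constructor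
      · intro k
        exact mul_nonneg (mul_nonneg (hqO.1 _) (hqI.1 _)) (hqP.1 _)
      · rw [Equiv.sum_comp e.symm Qf]
        show (∑ w : Fin m × Fin nI × Fin n, qO w.1 * qI w.2.1 * qP w.2.2) = 1
        simp only [Fintype.sum_prod_type]
        have h3 : ∀ (u : Fin m) (v : Fin nI), (∑ l, qO u * qI v * qP l)
            = qO u * qI v := by
          intro u v
          rw [← Finset.mul_sum, hqP.2, mul_one]
        simp only [h3]
        have h4 : ∀ u : Fin m, (∑ v, qO u * qI v) = qO u := by
          intro u
          rw [← Finset.mul_sum, hqI.2, mul_one]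
        simp only [h4]
        exact hqO.2
    · intro χ k
      constructor
      · intro α
        refine Finset.sum_nonneg fun a _ => Finset.sum_nonneg fun x _ => ?_
        exact mul_nonneg (mul_nonneg ((hOA _ _ _ _).1 _) ((hIA _ _).1 _)) ((hPA _ _).1 _)
      · set w := e.symm k with hw
        show (∑ α, ∑ a, ∑ x, OA α a x χ w.1 * IA x χ w.2.1 * PA a x w.2.2) = 1
        rw [show (∑ α, ∑ a, ∑ x, OA α a x χ w.1 * IA x χ w.2.1 * PA a x w.2.2)
            = ∑ a, ∑ x, ∑ α, OA α a x χ w.1 * IA x χ w.2.1 * PA a x w.2.2 from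
          (sw2 fun a x α => OA α a x χ w.1 * IA x χ w.2.1 * PA a x w.2.2).symm]
        have h1 : ∀ a x, (∑ α, OA α a x χ w.1 * IA x χ w.2.1 * PA a x w.2.2)
            = IA x χ w.2.1 * PA a x w.2.2 := by
          intro a x
          simp only [mul_assoc, ← Finset.sum_mul]
          rw [(hOA a x χ w.1).2, one_mul]
        simp only [h1]
        rw [Finset.sum_comm]
        have h2 : ∀ x, (∑ a, IA x χ w.2.1 * PA a x w.2.2) = IA x χ w.2.1 := by
          intro x
          rw [← Finset.mul_sum, (hPA x w.2.2).2, mul_one]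
        simp only [h2]
        exact (hIA χ w.2.1).2
    · intro ψ k
      constructor
      · intro β
        refine Finset.sum_nonneg fun b _ => Finset.sum_nonneg fun y _ => ?_
        exact mul_nonneg (mul_nonneg ((hOB _ _ _ _).1 _) ((hIB _ _).1 _)) ((hPB _ _).1 _)
      · set w := e.symm k with hw
        show (∑ β, ∑ b, ∑ y, OB β b y ψ w.1 * IB y ψ w.2.1 * PB b y w.2.2) = 1
        rw [show (∑ β, ∑ b, ∑ y, OB β b y ψ w.1 * IB y ψ w.2.1 * PB b y w.2.2)
            = ∑ b, ∑ y, ∑ β, OB β b y ψ w.1 * IB y ψ w.2.1 * PB b y w.2.2 from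
          (sw2 fun b y β => OB β b y ψ w.1 * IB y ψ w.2.1 * PB b y w.2.2).symm]
        have h1 : ∀ b y, (∑ β, OB β b y ψ w.1 * IB y ψ w.2.1 * PB b y w.2.2)
            = IB y ψ w.2.1 * PB b y w.2.2 := by
          intro b y
          simp only [mul_assoc, ← Finset.sum_mul]
          rw [(hOB b y ψ w.1).2, one_mul]
        simp only [h1]
        rw [Finset.sum_comm]
        have h2 : ∀ y, (∑ b, IB y ψ w.2.1 * PB b y w.2.2) = IB y ψ w.2.1 := by
          intro y
          rw [← Finset.mul_sum, (hPB y w.2.2).2, mul_one]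
        simp only [h2]
        exact (hIB ψ w.2.1).2
    · intro α β χ ψ
      rw [key α β χ ψ]
      exact (Equiv.sum_comp e.symm fun w => Qf w * Af α χ w * Bf β ψ w).symm
end

section
/- LOSR wirings preserve the no-signaling property: if P is a no-signaling behavior in the (r,s) Bell scenario and W is an LOSR wiring from the (r,s) scenario to the (r_f,s_f) scenario, then W(P) is a no-signaling behavior in the (r_f,s_f) scenario. -/
open scoped ENNReal
open Finset

private lemma sc2 {A B M : Type*} [Fintype A] [Fintype B] [AddCommMonoid M]
    (f : A → B → M) : ∑ v, ∑ a, f v a = ∑ a, ∑ v, f v a := Finset.sum_comm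

private lemma sc3 {A B C M : Type*} [Fintype A] [Fintype B] [Fintype C] [AddCommMonoid M]
    (f : A → B → C → M) : ∑ v, ∑ a, ∑ b, f v a b = ∑ a, ∑ b, ∑ v, f v a b :=
  calc ∑ v, ∑ a, ∑ b, f v a b = ∑ a, ∑ v, ∑ b, f v a b := Finset.sum_comm
    _ = ∑ a, ∑ b, ∑ v, f v a b := Finset.sum_congr rfl fun _ _ => Finset.sum_comm

private lemma sc4 {A B C D M : Type*} [Fintype A] [Fintype B] [Fintype C] [Fintype D]
    [AddCommMonoid M] (f : A → B → C → D → M) :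
    ∑ v, ∑ a, ∑ b, ∑ c, f v a b c = ∑ a, ∑ b, ∑ c, ∑ v, f v a b c :=
  calc ∑ v, ∑ a, ∑ b, ∑ c, f v a b c = ∑ a, ∑ v, ∑ b, ∑ c, f v a b c := Finset.sum_comm
    _ = ∑ a, ∑ b, ∑ c, ∑ v, f v a b c := Finset.sum_congr rfl fun a _ => sc3 fun v b c => f v a b c

private lemma sc5 {A B C D E M : Type*} [Fintype A] [Fintype B] [Fintype C] [Fintype D]
    [Fintype E] [AddCommMonoid M] (f : A → B → C → D → E → M) :
    ∑ v, ∑ a, ∑ b, ∑ c, ∑ d, f v a b c d = ∑ a, ∑ b, ∑ c, ∑ d, ∑ v, f v a b c d :=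
  calc ∑ v, ∑ a, ∑ b, ∑ c, ∑ d, f v a b c d
      = ∑ a, ∑ v, ∑ b, ∑ c, ∑ d, f v a b c d := Finset.sum_comm
    _ = ∑ a, ∑ b, ∑ c, ∑ d, ∑ v, f v a b c d := Finset.sum_congr rfl fun a _ => sc4 fun v b c d => f v a b c d

/-- LOSR wirings preserve the no-signaling property. -/
theorem LOSR_preserves_noSignaling {r s rf sf : ℕ}
    (P : Fin r → Fin r → Fin s → Fin s → ℝ)
    (hP : IsBehavior P) (hPns : NoSignaling P)
    (W : GlobalWiring r s rf sf) (hW : W.IsLOSR) :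
    IsBehavior (W.apply P) ∧ NoSignaling (W.apply P) := by
  obtain ⟨n, m, q, q', IA, IB, OA, OB, hq, hq', hIA, hIB, hOA, hOB, hI, hO⟩ := hW
  have happ_nonneg : ∀ α β χ ψ, 0 ≤ W.apply P α β χ ψ := by
    intro α β χ ψ
    refine Finset.sum_nonneg fun a _ => Finset.sum_nonneg fun b _ =>
      Finset.sum_nonneg fun x _ => Finset.sum_nonneg fun y _ => ?_
    exact mul_nonneg (mul_nonneg (W.O_nonneg _ _ _ _ _ _ _ _) (hP.1 _ _ _ _))
      (W.I_nonneg _ _ _ _)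
  rcases Nat.eq_zero_or_pos sf with hsf | hsf
  · exact ⟨⟨happ_nonneg, fun χ ψ => absurd χ.isLt (by omega)⟩,
      fun b χ χ' ψ => absurd χ.isLt (by omega),
      fun a χ ψ ψ' => absurd ψ.isLt (by omega)⟩
  have hs : 0 < s := by
    rcases Nat.eq_zero_or_pos s with h | h
    · exfalso; have h1 := W.I_sum ⟨0, hsf⟩ ⟨0, hsf⟩; subst h; simp at h1
    · exact h
  have sumO : ∀ (β : Fin rf) a b x y χ ψ,
      ∑ α, W.O α β a b x y χ ψ = ∑ u, q' u * OB β b y ψ u := by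
    intro β a b x y χ ψ
    simp only [hO]
    rw [Finset.sum_comm]
    refine Finset.sum_congr rfl fun u _ => ?_
    simp only [← Finset.sum_mul]
    rw [← Finset.mul_sum, (hOA a x χ u).2, mul_one]
  have sumO' : ∀ (α : Fin rf) a b x y χ ψ,
      ∑ β, W.O α β a b x y χ ψ = ∑ u, q' u * OA α a x χ u := by
    intro α a b x y χ ψ
    simp only [hO]
    rw [Finset.sum_comm]
    refine Finset.sum_congr rfl fun u _ => ?_
    rw [← Finset.mul_sum, (hOB b y ψ u).2, mul_one]
  have sumIx : ∀ y χ ψ, ∑ x, W.I x y χ ψ = ∑ l, q l * IB y ψ l := by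
    intro y χ ψ
    simp only [hI]
    rw [Finset.sum_comm]
    refine Finset.sum_congr rfl fun l _ => ?_
    simp only [← Finset.sum_mul]
    rw [← Finset.mul_sum, (hIA χ l).2, mul_one]
  have sumIy : ∀ x χ ψ, ∑ y, W.I x y χ ψ = ∑ l, q l * IA x χ l := by
    intro x χ ψ
    simp only [hI]
    rw [Finset.sum_comm]
    refine Finset.sum_congr rfl fun l _ => ?_
    rw [← Finset.mul_sum, (hIB ψ l).2, mul_one]
  have keyA : ∀ (β : Fin rf) (χ ψ : Fin sf),
      ∑ α, W.apply P α β χ ψ =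
        ∑ b, ∑ y, (∑ u, q' u * OB β b y ψ u) * (∑ a, P a b ⟨0, hs⟩ y) *
          (∑ l, q l * IB y ψ l) := by
    intro β χ ψ
    simp only [GlobalWiring.apply]
    calc
      ∑ α, ∑ a, ∑ b, ∑ x, ∑ y, W.O α β a b x y χ ψ * P a b x y * W.I x y χ ψ
        = ∑ a, ∑ b, ∑ x, ∑ y, ∑ α, W.O α β a b x y χ ψ * P a b x y * W.I x y χ ψ :=
          sc5 _
      _ = ∑ a, ∑ b, ∑ x, ∑ y, (∑ u, q' u * OB β b y ψ u) * P a b x y * W.I x y χ ψ := by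
          refine Finset.sum_congr rfl fun a _ => Finset.sum_congr rfl fun b _ =>
            Finset.sum_congr rfl fun x _ => Finset.sum_congr rfl fun y _ => ?_
          simp only [← Finset.sum_mul]
          rw [sumO]
      _ = ∑ b, ∑ x, ∑ y, ∑ a, (∑ u, q' u * OB β b y ψ u) * P a b x y * W.I x y χ ψ :=
          sc4 _
      _ = ∑ b, ∑ x, ∑ y, (∑ u, q' u * OB β b y ψ u) * (∑ a, P a b ⟨0, hs⟩ y) *
            W.I x y χ ψ := by
          refine Finset.sum_congr rfl fun b _ => Finset.sum_congr rfl fun x _ =>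
            Finset.sum_congr rfl fun y _ => ?_
          rw [show (∑ a, (∑ u, q' u * OB β b y ψ u) * P a b x y * W.I x y χ ψ)
              = (∑ u, q' u * OB β b y ψ u) * (∑ a, P a b x y) * W.I x y χ ψ by
            simp only [← Finset.sum_mul]; rw [← Finset.mul_sum],
            hPns.1 b x ⟨0, hs⟩ y]
      _ = ∑ b, ∑ y, ∑ x, (∑ u, q' u * OB β b y ψ u) * (∑ a, P a b ⟨0, hs⟩ y) *
            W.I x y χ ψ :=
          Finset.sum_congr rfl fun b _ => Finset.sum_comm
      _ = ∑ b, ∑ y, (∑ u, q' u * OB β b y ψ u) * (∑ a, P a b ⟨0, hs⟩ y) *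
            (∑ l, q l * IB y ψ l) := by
          refine Finset.sum_congr rfl fun b _ => Finset.sum_congr rfl fun y _ => ?_
          rw [← Finset.mul_sum, sumIx]
  have keyB : ∀ (α : Fin rf) (χ ψ : Fin sf),
      ∑ β, W.apply P α β χ ψ =
        ∑ a, ∑ x, (∑ u, q' u * OA α a x χ u) * (∑ b, P a b x ⟨0, hs⟩) *
          (∑ l, q l * IA x χ l) := by
    intro α χ ψ
    simp only [GlobalWiring.apply]
    calc
      ∑ β, ∑ a, ∑ b, ∑ x, ∑ y, W.O α β a b x y χ ψ * P a b x y * W.I x y χ ψ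
        = ∑ a, ∑ b, ∑ x, ∑ y, ∑ β, W.O α β a b x y χ ψ * P a b x y * W.I x y χ ψ :=
          sc5 _
      _ = ∑ a, ∑ b, ∑ x, ∑ y, (∑ u, q' u * OA α a x χ u) * P a b x y * W.I x y χ ψ := by
          refine Finset.sum_congr rfl fun a _ => Finset.sum_congr rfl fun b _ =>
            Finset.sum_congr rfl fun x _ => Finset.sum_congr rfl fun y _ => ?_
          simp only [← Finset.sum_mul]
          rw [sumO']
      _ = ∑ a, ∑ x, ∑ y, ∑ b, (∑ u, q' u * OA α a x χ u) * P a b x y * W.I x y χ ψ :=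
          Finset.sum_congr rfl fun a _ => sc3 _
      _ = ∑ a, ∑ x, ∑ y, (∑ u, q' u * OA α a x χ u) * (∑ b, P a b x ⟨0, hs⟩) *
            W.I x y χ ψ := by
          refine Finset.sum_congr rfl fun a _ => Finset.sum_congr rfl fun x _ =>
            Finset.sum_congr rfl fun y _ => ?_
          rw [show (∑ b, (∑ u, q' u * OA α a x χ u) * P a b x y * W.I x y χ ψ)
              = (∑ u, q' u * OA α a x χ u) * (∑ b, P a b x y) * W.I x y χ ψ by
            simp only [← Finset.sum_mul]; rw [← Finset.mul_sum],
            hPns.2 a x y ⟨0, hs⟩]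
      _ = ∑ a, ∑ x, (∑ u, q' u * OA α a x χ u) * (∑ b, P a b x ⟨0, hs⟩) *
            (∑ l, q l * IA x χ l) := by
          refine Finset.sum_congr rfl fun a _ => Finset.sum_congr rfl fun x _ => ?_
          rw [← Finset.mul_sum, sumIy]
  have hOBtot : ∀ (b : Fin r) (y : Fin s) (ψ : Fin sf),
      ∑ β, ∑ u, q' u * OB β b y ψ u = 1 := by
    intro b y ψ
    rw [Finset.sum_comm]
    calc ∑ u, ∑ β, q' u * OB β b y ψ u
        = ∑ u, q' u := Finset.sum_congr rfl fun u _ => by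
          rw [← Finset.mul_sum, (hOB b y ψ u).2, mul_one]
      _ = 1 := hq'.2
  have hIBtot : ∀ ψ : Fin sf, ∑ y, ∑ l, q l * IB y ψ l = 1 := by
    intro ψ
    rw [Finset.sum_comm]
    calc ∑ l, ∑ y, q l * IB y ψ l
        = ∑ l, q l := Finset.sum_congr rfl fun l _ => by
          rw [← Finset.mul_sum, (hIB ψ l).2, mul_one]
      _ = 1 := hq.2
  have hPm : ∀ y : Fin s, ∑ b, ∑ a, P a b ⟨0, hs⟩ y = 1 := by
    intro y
    rw [Finset.sum_comm]
    exact hP.2 ⟨0, hs⟩ y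
  have hsum1 : ∀ χ ψ, ∑ α, ∑ β, W.apply P α β χ ψ = 1 := by
    intro χ ψ
    rw [Finset.sum_comm]
    calc
      ∑ β, ∑ α, W.apply P α β χ ψ
        = ∑ β, ∑ b, ∑ y, (∑ u, q' u * OB β b y ψ u) * (∑ a, P a b ⟨0, hs⟩ y) *
            (∑ l, q l * IB y ψ l) := Finset.sum_congr rfl fun β _ => keyA β χ ψ
      _ = ∑ b, ∑ y, ∑ β, (∑ u, q' u * OB β b y ψ u) * (∑ a, P a b ⟨0, hs⟩ y) *
            (∑ l, q l * IB y ψ l) := sc3 _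
      _ = ∑ b, ∑ y, (∑ a, P a b ⟨0, hs⟩ y) * (∑ l, q l * IB y ψ l) := by
          refine Finset.sum_congr rfl fun b _ => Finset.sum_congr rfl fun y _ => ?_
          simp only [← Finset.sum_mul]
          rw [hOBtot b y ψ, one_mul]
      _ = ∑ y, ∑ b, (∑ a, P a b ⟨0, hs⟩ y) * (∑ l, q l * IB y ψ l) := Finset.sum_comm
      _ = ∑ y, ∑ l, q l * IB y ψ l := by
          refine Finset.sum_congr rfl fun y _ => ?_
          rw [← Finset.sum_mul, hPm y, one_mul]
      _ = 1 := hIBtot ψ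
  refine ⟨⟨happ_nonneg, hsum1⟩, ?_, ?_⟩
  · intro b χ χ' ψ
    rw [keyA b χ ψ, keyA b χ' ψ]
  · intro a χ ψ ψ'
    rw [keyB a χ ψ, keyB a χ ψ']
end
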